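/- arXiv:2405.01152 — 8 statements merged into one kernel-verified Lean document; each statement's English description precedes it below -/
import Mathlib

section
/- In a triangle A --x--> B --y--> C --z--> A[1] in a Krull-Schmidt triangulated category, the following are equivalent: (1) x is left minimal; (2) y lies in the Jacobson radical of the category; (3) z is right minimal. -/
open CategoryTheory CategoryTheory.Limits CategoryTheory.Pretriangulated

universe v u w

namespace RelCT

/-- Krull–Schmidt: every object decomposes as a finite biproduct of objects with local
endomorphism rings. -/
def KrullSchmidtCat (C : Type u) [Category.{v} C] [Preadditive C] : Prop :=
  ∀ X : C, ∃ (n : ℕ) (f : Fin n → C) (p : ∀ i, X ⟶ f i) (ι : ∀ i, f i ⟶ X),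
    (∀ i, ι i ≫ p i = 𝟙 (f i)) ∧ (∑ i, p i ≫ ι i) = 𝟙 X ∧
    ∀ i (φ : f i ⟶ f i), IsIso φ ∨ IsIso (𝟙 (f i) - φ)

/-- `Fac W`: objects admitting an epimorphism from an object of `W`. -/
def FacSet {Q : Type w} [Category Q] (W : Set Q) : Set Q :=
  {Y | ∃ X ∈ W, ∃ p : X ⟶ Y, Epi p}

/-- `Ext¹(X, F) = 0`, expressed as: every short exact sequence
`0 → F → E → X → 0` splits. -/
def Ext1Zero {Q : Type w} [Category Q] [Abelian Q] (X F : Q) : Prop :=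
  ∀ S : CategoryTheory.ShortComplex Q, S.ShortExact → (S.X₁ ≅ F) → (S.X₃ ≅ X) →
    ∃ r : S.X₂ ⟶ S.X₁, S.f ≫ r = 𝟙 S.X₁

variable {C : Type u} [Category.{v} C] [Preadditive C] [HasZeroObject C]
  [HasShift C ℤ] [∀ n : ℤ, (CategoryTheory.shiftFunctor C n).Additive] [Pretriangulated C]

/-- The shift `D[n]` of a collection of objects, closed under isomorphism. -/
def shiftSet (D : Set C) (n : ℤ) : Set C :=
  {X | ∃ Y ∈ D, Nonempty (X ≅ Y⟦n⟧)}

/-- `f` factors through an object of `D`. -/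
def Factors (D : Set C) {A B : C} (f : A ⟶ B) : Prop :=
  ∃ (Z : C) (g : A ⟶ Z) (h : Z ⟶ B), Z ∈ D ∧ f = g ≫ h

/-- `X * Y`: objects `M` admitting a distinguished triangle `A → M → B → A[1]`
with `A ∈ X`, `B ∈ Y`. -/
def star (X Y : Set C) : Set C :=
  {M | ∃ (A B : C) (f : A ⟶ M) (g : M ⟶ B) (h : B ⟶ A⟦(1:ℤ)⟧),
    A ∈ X ∧ B ∈ Y ∧ (Triangle.mk f g h ∈ distTriang C)}

/-- `R` is rigid: `Hom(R, R[1]) = 0`. -/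
def Rigid (R : Set C) : Prop :=
  ∀ ⦃A B : C⦄, A ∈ R → B ∈ R → ∀ f : A ⟶ B⟦(1:ℤ)⟧, f = 0

/-- `[R[1]](X, Y[1]) = 0` : every morphism from an object of `X` to a first shift of
an object of `Y` which factors through `R[1]` vanishes. -/
def RelRigid (R X Y : Set C) : Prop :=
  ∀ ⦃A B : C⦄, A ∈ X → B ∈ Y → ∀ f : A ⟶ B⟦(1:ℤ)⟧, Factors (shiftSet R 1) f → f = 0

/-- Closure of a collection of objects under finite direct sums and direct summands. -/
inductive addClosure (D : Set C) : C → Prop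
  | of {X : C} : X ∈ D → addClosure D X
  | zero {X : C} : IsZero X → addClosure D X
  | sum {X Y Z : C} : addClosure D X → addClosure D Y →
      (∃ (pX : Z ⟶ X) (pY : Z ⟶ Y) (iX : X ⟶ Z) (iY : Y ⟶ Z),
        iX ≫ pX = 𝟙 X ∧ iY ≫ pY = 𝟙 Y ∧ pX ≫ iX + pY ≫ iY = 𝟙 Z) →
      addClosure D Z
  | smd {X Y : C} : addClosure D Y → (∃ (s : X ⟶ Y) (r : Y ⟶ X), s ≫ r = 𝟙 X) →
      addClosure D X

/-- `D` is closed under finite direct sums and direct summands. -/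
def AddClosed (D : Set C) : Prop := ∀ X : C, addClosure D X → X ∈ D

/-- closed under direct sums (expressed via biproduct data). -/
def SumClosed (D : Set C) : Prop :=
  ∀ ⦃X Y Z : C⦄, X ∈ D → Y ∈ D →
    (∃ (pX : Z ⟶ X) (pY : Z ⟶ Y) (iX : X ⟶ Z) (iY : Y ⟶ Z),
      iX ≫ pX = 𝟙 X ∧ iY ≫ pY = 𝟙 Y ∧ pX ≫ iX + pY ≫ iY = 𝟙 Z) → Z ∈ D

/-- closed under direct summands. -/
def SummandClosed (D : Set C) : Prop :=
  ∀ ⦃X Y : C⦄, Y ∈ D → (∃ (s : X ⟶ Y) (r : Y ⟶ X), s ≫ r = 𝟙 X) → X ∈ D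

/-- closed under isomorphisms. -/
def IsoClosed (D : Set C) : Prop :=
  ∀ ⦃X Y : C⦄, X ∈ D → Nonempty (X ≅ Y) → Y ∈ D

/-- `f : A ⟶ X` is a left `D`-approximation of `A`. -/
def IsLeftApprox (D : Set C) {A X : C} (f : A ⟶ X) : Prop :=
  X ∈ D ∧ ∀ ⦃X' : C⦄, X' ∈ D → ∀ g : A ⟶ X', ∃ h : X ⟶ X', f ≫ h = g

/-- `f : X ⟶ A` is a right `D`-approximation of `A`. -/
def IsRightApprox (D : Set C) {X A : C} (f : X ⟶ A) : Prop :=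
  X ∈ D ∧ ∀ ⦃X' : C⦄, X' ∈ D → ∀ g : X' ⟶ A, ∃ h : X' ⟶ X, h ≫ f = g

/-- `f` is left minimal. -/
def LeftMinimal {A B : C} (f : A ⟶ B) : Prop :=
  ∀ u : B ⟶ B, f ≫ u = f → IsIso u

/-- `f` is right minimal. -/
def RightMinimal {A B : C} (f : A ⟶ B) : Prop :=
  ∀ u : A ⟶ A, u ≫ f = f → IsIso u

/-- `f` lies in the Jacobson radical of the category. -/
def InRadical {A B : C} (f : A ⟶ B) : Prop :=
  ∀ g : B ⟶ A, IsIso (𝟙 A - f ≫ g)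

/-- indecomposable object. -/
def Indec (W : C) : Prop :=
  ¬ IsZero W ∧ ∀ p : W ⟶ W, p ≫ p = p → p = 0 ∨ p = 𝟙 W

/-- two-term `R[1]`-rigid subcategory. -/
def TwoTermRigid (R X : Set C) : Prop :=
  RelRigid R X X ∧ X ⊆ star R (shiftSet R 1)

/-- two-term maximal `R[1]`-rigid subcategory. -/
def TwoTermMaximal (R X : Set C) : Prop :=
  TwoTermRigid R X ∧
  ∀ M ∈ star R (shiftSet R 1),
    RelRigid R {Z | addClosure (insert M X) Z} {Z | addClosure (insert M X) Z} → M ∈ X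

/-- two-term weak `R[1]`-cluster tilting subcategory. -/
def TwoTermWCT (R X : Set C) : Prop :=
  X ⊆ star R (shiftSet R 1) ∧ R ⊆ star (shiftSet X (-1)) X ∧
  ∀ M : C, M ∈ X ↔ (M ∈ star R (shiftSet R 1) ∧ RelRigid R {M} X ∧ RelRigid R X {M})

/-- `R(X) = { R₀ ∈ R | Hom(R₀, X) = 0 }`. -/
def RZero (R X : Set C) : Set C :=
  {A | A ∈ R ∧ ∀ B ∈ X, ∀ f : A ⟶ B, f = 0}

/-- `X` is `R[1]`-functorially finite. -/
def RFunctoriallyFinite (R X : Set C) : Prop :=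
  (∀ R₀ ∈ R, ∃ (X₀ : C) (f : R₀ ⟶ X₀), IsLeftApprox X f) ∧
  (∀ A ∈ shiftSet R 1, ∃ (X₀ : C) (f : X₀ ⟶ A), IsRightApprox X f)

/-- Data of triangles `R₀ → X^{R₀} → V^{R₀} → R₀[1]` with minimal left `X`-approximations,
defining the completion `M_X`. -/
structure MData (R X : Set C) where
  obj : ∀ R₀ : C, R₀ ∈ R → C
  cone : ∀ R₀ : C, R₀ ∈ R → C
  f : ∀ (R₀ : C) (h : R₀ ∈ R), R₀ ⟶ obj R₀ h
  g : ∀ (R₀ : C) (h : R₀ ∈ R), obj R₀ h ⟶ cone R₀ h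
  w : ∀ (R₀ : C) (h : R₀ ∈ R), cone R₀ h ⟶ R₀⟦(1:ℤ)⟧
  tri : ∀ (R₀ : C) (h : R₀ ∈ R), Triangle.mk (f R₀ h) (g R₀ h) (w R₀ h) ∈ distTriang C
  approx : ∀ (R₀ : C) (h : R₀ ∈ R), IsLeftApprox X (f R₀ h)
  minimal : ∀ (R₀ : C) (h : R₀ ∈ R), LeftMinimal (f R₀ h)

/-- `M_X = add (X ∪ {V^R | R ∈ R})`. -/
def MData.cat {R X : Set C} (d : MData R X) : Set C :=
  {Z | addClosure (X ∪ {V | ∃ (R₀ : C) (h : R₀ ∈ R), V = d.cone R₀ h}) Z}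

/-- Data of triangles `R₀ → V_{R₀} → U_{R₀} → R₀[1]` with the last map a right
`X`-approximation, defining the completion `N_X`. -/
structure NData (R X : Set C) where
  cocone : ∀ R₀ : C, R₀ ∈ R → C
  obj : ∀ R₀ : C, R₀ ∈ R → C
  a : ∀ (R₀ : C) (h : R₀ ∈ R), R₀ ⟶ cocone R₀ h
  b : ∀ (R₀ : C) (h : R₀ ∈ R), cocone R₀ h ⟶ obj R₀ h
  c : ∀ (R₀ : C) (h : R₀ ∈ R), obj R₀ h ⟶ R₀⟦(1:ℤ)⟧
  tri : ∀ (R₀ : C) (h : R₀ ∈ R), Triangle.mk (a R₀ h) (b R₀ h) (c R₀ h) ∈ distTriang C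
  approx : ∀ (R₀ : C) (h : R₀ ∈ R), IsRightApprox X (c R₀ h)

/-- `N_X = add (X ∪ {V_R | R ∈ R})`. -/
def NData.cat {R X : Set C} (d : NData R X) : Set C :=
  {Z | addClosure (X ∪ {V | ∃ (R₀ : C) (h : R₀ ∈ R), V = d.cocone R₀ h}) Z}

/-- `(M, N)` is an `X`-mutation pair. -/
def MutationPair (R X M N : Set C) : Prop :=
  M ≠ N ∧ TwoTermWCT R M ∧ TwoTermWCT R N ∧ X ⊆ M ∧ X ⊆ N ∧
  (∀ Y ∈ M, ∃ (Z X₀ : C) (z : Z ⟶ X₀) (x : X₀ ⟶ Y) (y : Y ⟶ Z⟦(1:ℤ)⟧),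
      Z ∈ N ∧ X₀ ∈ X ∧ (Triangle.mk z x y ∈ distTriang C) ∧ Factors (shiftSet R 1) y) ∧
  (∀ Z' ∈ N, ∃ (X' Y' : C) (z' : Z' ⟶ X') (x' : X' ⟶ Y') (y' : Y' ⟶ Z'⟦(1:ℤ)⟧),
      X' ∈ X ∧ Y' ∈ M ∧ (Triangle.mk z' x' y' ∈ distTriang C) ∧ Factors (shiftSet R 1) y')

/-- almost complete two-term weak `R[1]`-cluster tilting subcategory. -/
def AlmostComplete (R X : Set C) : Prop :=
  TwoTermRigid R X ∧ RFunctoriallyFinite R X ∧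
    ∃ W : C, Indec W ∧ W ∉ X ∧ TwoTermWCT R {Z | addClosure (insert W X) Z}

/-- completion of an almost complete subcategory `X`. -/
def IsCompletion (R X U : Set C) : Prop :=
  TwoTermWCT R U ∧ ∃ W : C, Indec W ∧ W ∉ X ∧ U = {Z | addClosure (insert W X) Z}

/- For a distinguished triangle `A → B → Z → A[1]`, an endomorphism `u` of `B` with `x ≫ u = x`
has `𝟙 - u` killing `x`, so `𝟙 - u = y ≫ g` by exactness of `Hom(-, B)`; dually an
endomorphism `u` of `Z` with `u ≫ z = z` has the form `𝟙 - g ≫ y`. Hence left minimality of `x`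
and right minimality of `z` say that all `𝟙 - y ≫ g`, resp. all `𝟙 - g ≫ y`, are invertible,
and these two conditions agree by Jacobson's lemma. -/

theorem isIso_id_sub_comp_swap {D : Type*} [Category D] [Preadditive D] {X Y : D}
    (f : X ⟶ Y) (g : Y ⟶ X) (h : IsIso (𝟙 X - f ≫ g)) : IsIso (𝟙 Y - g ≫ f) := by
  set v := inv (𝟙 X - f ≫ g)
  refine ⟨𝟙 Y + g ≫ v ≫ f, ?_, ?_⟩
  · calc (𝟙 Y - g ≫ f) ≫ (𝟙 Y + g ≫ v ≫ f)
        = 𝟙 Y - g ≫ f + g ≫ ((𝟙 X - f ≫ g) ≫ v) ≫ f := by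
          simp only [Preadditive.comp_add, Preadditive.sub_comp, Preadditive.comp_sub,
            Category.comp_id, Category.id_comp, Category.assoc]
      _ = 𝟙 Y := by rw [IsIso.hom_inv_id, Category.id_comp, sub_add_cancel]
  · calc (𝟙 Y + g ≫ v ≫ f) ≫ (𝟙 Y - g ≫ f)
        = 𝟙 Y - g ≫ f + g ≫ (v ≫ (𝟙 X - f ≫ g)) ≫ f := by
          simp only [Preadditive.add_comp, Preadditive.sub_comp, Preadditive.comp_sub,
            Category.comp_id, Category.id_comp, Category.assoc]
          abel
      _ = 𝟙 Y := by rw [IsIso.inv_hom_id, Category.id_comp, sub_add_cancel]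

theorem inRadical_iff_isIso_id_sub_comp {D : Type*} [Category D] [Preadditive D] {X Y : D}
    (f : X ⟶ Y) : InRadical f ↔ ∀ g : Y ⟶ X, IsIso (𝟙 Y - g ≫ f) :=
  ⟨fun hf g => isIso_id_sub_comp_swap f g (hf g), fun hf g => isIso_id_sub_comp_swap g f (hf g)⟩

theorem leftMinimal_mor₁_iff_inRadical_mor₂ {T : Triangle C} (hT : T ∈ distTriang C) :
    LeftMinimal T.mor₁ ↔ InRadical T.mor₂ := by
  constructor
  · intro hx g
    apply hx
    simp [Preadditive.comp_sub, comp_distTriang_mor_zero₁₂_assoc _ hT]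
  · intro hy u hu
    obtain ⟨g, hg⟩ :=
      Triangle.yoneda_exact₂ T hT (𝟙 T.obj₂ - u) (by simp [Preadditive.comp_sub, hu])
    rw [← sub_sub_cancel (𝟙 T.obj₂) u, hg]
    exact hy g

theorem inRadical_mor₂_iff_rightMinimal_mor₃ {T : Triangle C} (hT : T ∈ distTriang C) :
    InRadical T.mor₂ ↔ RightMinimal T.mor₃ := by
  rw [inRadical_iff_isIso_id_sub_comp]
  constructor
  · intro hy u hu
    obtain ⟨g, hg⟩ :=
      Triangle.coyoneda_exact₃ T hT (𝟙 T.obj₃ - u) (by simp [Preadditive.sub_comp, hu])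
    rw [← sub_sub_cancel (𝟙 T.obj₃) u, hg]
    exact hy g
  · intro hz g
    apply hz
    simp [Preadditive.sub_comp, comp_distTriang_mor_zero₂₃ _ hT]

theorem statement_0_general
    {A B Z : C} (x : A ⟶ B) (y : B ⟶ Z) (z : Z ⟶ A⟦(1:ℤ)⟧)
    (hT : Triangle.mk x y z ∈ distTriang C) :
    (LeftMinimal x ↔ InRadical y) ∧ (InRadical y ↔ RightMinimal z) :=
  ⟨leftMinimal_mor₁_iff_inRadical_mor₂ hT, inRadical_mor₂_iff_rightMinimal_mor₃ hT⟩

theorem statement_0 (hKS : KrullSchmidtCat C)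
    {A B Z : C} (x : A ⟶ B) (y : B ⟶ Z) (z : Z ⟶ A⟦(1:ℤ)⟧)
    (hT : Triangle.mk x y z ∈ distTriang C) :
    (LeftMinimal x ↔ InRadical y) ∧ (InRadical y ↔ RightMinimal z) :=
  statement_0_general x y z hT

end RelCT
end

section
/- If R is a rigid subcategory of a Krull-Schmidt triangulated category C (i.e. Hom(R, R[1]) = 0), then the subcategory R * R[1] is closed under direct sums, direct summands and isomorphisms. -/
open CategoryTheory CategoryTheory.Limits CategoryTheory.Pretriangulated

universe v u w

namespace RelCT

variable {C : Type u} [Category.{v} C] [Preadditive C] [HasZeroObject C]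
  [HasShift C ℤ] [∀ n : ℤ, (CategoryTheory.shiftFunctor C n).Additive] [Pretriangulated C]

/-!
If `A → M → Y → A[1]` is distinguished and the map `M → Y` is unchanged by composing with
`y₁ ≫ y₂ : Y → W → Y`, then `𝟙 - y₁ ≫ y₂` vanishes on `M`, hence factors through `Y → A[1]`,
and `Y` is a retract of `W ⊕ A[1]`. With `A ∈ R` and `W ∈ R[1]` this puts `Y` in `R[1]`, so
`M ∈ R * R[1]`.

For a retract `Z` of `M`, take a triangle `A → M → B → A[1]` with `A ∈ R`, `B ∈ R[1]`. By rigidity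
every map from `R` to `M` lifts along `A → M`, so the triangle on `A → M → Z` maps to the one of
`M` and back, and its cone `Y` factors through `W = B` as above. For a direct sum, the triangle on
`A₁ ⊕ A₂ → X ⊕ Y` is compared in the same way with those of `X` and `Y`, using `W = B₁ ⊕ B₂`.
-/

lemma AddClosed.summandClosed {C : Type*} [Category C] [Preadditive C] {R : Set C}
    (hR : AddClosed R) : SummandClosed R :=
  fun _ _ hY hXY => hR _ (.smd (.of hY) hXY)

lemma AddClosed.biprod_mem {C : Type*} [Category C] [Preadditive C] [HasBinaryBiproducts C]
    {R : Set C} (hR : AddClosed R) {X Y : C} (hX : X ∈ R) (hY : Y ∈ R) : (X ⊞ Y) ∈ R :=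
  hR _ (.sum (.of hX) (.of hY)
    ⟨biprod.fst, biprod.snd, biprod.inl, biprod.inr, by simp, by simp, biprod.total⟩)

lemma SummandClosed.mem_of_retract {C : Type*} [Category C] {D : Set C}
    (hD : SummandClosed D) {X Y : C} (h : Retract X Y) (hY : Y ∈ D) : X ∈ D :=
  hD hY ⟨h.i, h.r, h.retract⟩

lemma SummandClosed.isoClosed {C : Type*} [Category C] {D : Set C} (hD : SummandClosed D) :
    IsoClosed D :=
  fun _ _ hX ⟨e⟩ => hD hX ⟨e.inv, e.hom, e.inv_hom_id⟩

lemma summandClosed_shiftSet {C : Type*} [Category C] [HasShift C ℤ] {R : Set C}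
    (hR : SummandClosed R) (n : ℤ) : SummandClosed (shiftSet R n) := by
  rintro Y W ⟨R₀, hR₀, ⟨e⟩⟩ ⟨i, r, hir⟩
  refine ⟨Y⟦-n⟧, hR.mem_of_retract ?_ hR₀,
    ⟨((shiftFunctorCompIsoId C (-n) n (neg_add_cancel n)).app Y).symm⟩⟩
  exact (Retract.map ⟨i, r, hir⟩ (shiftFunctor C (-n))).trans (Retract.ofIso
    ((shiftFunctor C (-n)).mapIso e ≪≫ (shiftFunctorCompIsoId C n (-n) (add_neg_cancel n)).app R₀))

lemma biprod_mem_shiftSet {C : Type*} [Category C] [Preadditive C] [HasBinaryBiproducts C]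
    [HasShift C ℤ] [∀ n : ℤ, (shiftFunctor C n).Additive] {R : Set C} (hR : AddClosed R)
    {n : ℤ} {X Y : C} (hX : X ∈ shiftSet R n) (hY : Y ∈ shiftSet R n) :
    (X ⊞ Y) ∈ shiftSet R n := by
  obtain ⟨A, hA, ⟨e⟩⟩ := hX
  obtain ⟨B, hB, ⟨f⟩⟩ := hY
  have := preservesBinaryBiproducts_of_preservesBiproducts (shiftFunctor C n)
  exact ⟨A ⊞ B, hR.biprod_mem hA hB,
    ⟨biprod.mapIso e f ≪≫ ((shiftFunctor C n).mapBiprod A B).symm⟩⟩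

lemma Rigid.eq_zero_of_mem_shiftSet {C : Type*} [Category C] [Preadditive C] [HasShift C ℤ]
    {R : Set C} (hrig : Rigid R) {A Y : C} (hA : A ∈ R) (hY : Y ∈ shiftSet R 1) (w : A ⟶ Y) :
    w = 0 := by
  obtain ⟨B, hB, ⟨e⟩⟩ := hY
  exact (cancel_mono e.hom).1 (by rw [hrig hA hB (w ≫ e.hom), zero_comp])

/- Stated for `Triangle.mk` rather than for a `Triangle`, so that `b` has the plain type
`B₁ ⟶ B₂`: rewriting with morphisms typed by `(Triangle.mk …).obj₃` fails. -/
lemma exists_comp_mor₂_eq {A₁ M₁ B₁ A₂ M₂ B₂ : C} {f₁ : A₁ ⟶ M₁} {g₁ : M₁ ⟶ B₁}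
    {h₁ : B₁ ⟶ A₁⟦(1 : ℤ)⟧} {f₂ : A₂ ⟶ M₂} {g₂ : M₂ ⟶ B₂} {h₂ : B₂ ⟶ A₂⟦(1 : ℤ)⟧}
    (hT₁ : Triangle.mk f₁ g₁ h₁ ∈ distTriang C) (hT₂ : Triangle.mk f₂ g₂ h₂ ∈ distTriang C)
    (a : A₁ ⟶ A₂) (m : M₁ ⟶ M₂) (comm : f₁ ≫ m = a ≫ f₂) : ∃ b : B₁ ⟶ B₂, g₁ ≫ b = m ≫ g₂ :=
  let ⟨b, hb, _⟩ := complete_distinguished_triangle_morphism _ _ hT₁ hT₂ a m comm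
  ⟨b, hb⟩

lemma nonempty_retract_obj₃_of_mor₂_comp {T : Triangle C} (hT : T ∈ distTriang C) {W : C}
    (y₁ : T.obj₃ ⟶ W) (y₂ : W ⟶ T.obj₃) (hy : T.mor₂ ≫ y₁ ≫ y₂ = T.mor₂) :
    Nonempty (Retract T.obj₃ (W ⊞ T.obj₁⟦(1 : ℤ)⟧)) := by
  obtain ⟨k, hk⟩ := T.yoneda_exact₃ hT (𝟙 _ - y₁ ≫ y₂)
    (by rw [Preadditive.comp_sub, hy, Category.comp_id, sub_self])
  exact ⟨⟨biprod.lift y₁ T.mor₃, biprod.desc y₂ k,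
    by rw [biprod.lift_desc, ← hk, add_sub_cancel]⟩⟩

lemma mem_star_of_mor₂_comp {R : Set C} (hR : AddClosed R) {T : Triangle C}
    (hT : T ∈ distTriang C) (h₁ : T.obj₁ ∈ R) {W : C} (hW : W ∈ shiftSet R 1)
    (y₁ : T.obj₃ ⟶ W) (y₂ : W ⟶ T.obj₃) (hy : T.mor₂ ≫ y₁ ≫ y₂ = T.mor₂) :
    T.obj₂ ∈ star R (shiftSet R 1) := by
  obtain ⟨e⟩ := nonempty_retract_obj₃_of_mor₂_comp hT y₁ y₂ hy
  have h₃ : T.obj₃ ∈ shiftSet R 1 :=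
    (summandClosed_shiftSet hR.summandClosed 1).mem_of_retract e
      (biprod_mem_shiftSet hR hW ⟨T.obj₁, h₁, ⟨Iso.refl _⟩⟩)
  exact ⟨T.obj₁, T.obj₃, T.mor₁, T.mor₂, T.mor₃, h₁, h₃, hT⟩

lemma summandClosed_star {R : Set C} (hrig : Rigid R) (hR : AddClosed R) :
    SummandClosed (star R (shiftSet R 1)) := by
  rintro Z M ⟨A, B, f, g, h, hA, hB, hT⟩ ⟨s, r, hsr⟩
  obtain ⟨Y, g', h', hT'⟩ := distinguished_cocone_triangle (f ≫ r)
  obtain ⟨a, ha⟩ : ∃ a : A ⟶ A, f ≫ r ≫ s = a ≫ f :=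
    Triangle.coyoneda_exact₂ _ hT _ (hrig.eq_zero_of_mem_shiftSet hA hB _)
  obtain ⟨y₁, hy₁⟩ := exists_comp_mor₂_eq hT' hT a s (by rw [Category.assoc, ha])
  obtain ⟨y₂, hy₂⟩ := exists_comp_mor₂_eq hT hT' (𝟙 A) r (Category.id_comp _).symm
  refine mem_star_of_mor₂_comp hR hT' hA hB y₁ y₂ ?_
  change g' ≫ y₁ ≫ y₂ = g'
  rw [reassoc_of% hy₁, hy₂, reassoc_of% hsr]

lemma biprod_mem_star {R : Set C} (hR : AddClosed R) {X Y : C}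
    (hX : X ∈ star R (shiftSet R 1)) (hY : Y ∈ star R (shiftSet R 1)) :
    (X ⊞ Y) ∈ star R (shiftSet R 1) := by
  obtain ⟨A₁, B₁, f₁, g₁, h₁, hA₁, hB₁, hT₁⟩ := hX
  obtain ⟨A₂, B₂, f₂, g₂, h₂, hA₂, hB₂, hT₂⟩ := hY
  obtain ⟨W, g, h, hT⟩ := distinguished_cocone_triangle (biprod.map f₁ f₂)
  obtain ⟨p₁, hp₁⟩ := exists_comp_mor₂_eq hT hT₁ biprod.fst biprod.fst (by simp)
  obtain ⟨p₂, hp₂⟩ := exists_comp_mor₂_eq hT hT₂ biprod.snd biprod.snd (by simp)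
  obtain ⟨i₁, hi₁⟩ := exists_comp_mor₂_eq hT₁ hT biprod.inl biprod.inl (by simp)
  obtain ⟨i₂, hi₂⟩ := exists_comp_mor₂_eq hT₂ hT biprod.inr biprod.inr (by simp)
  refine mem_star_of_mor₂_comp hR hT (hR.biprod_mem hA₁ hA₂) (biprod_mem_shiftSet hR hB₁ hB₂)
    (biprod.lift p₁ p₂) (biprod.desc i₁ i₂) ?_
  change g ≫ biprod.lift p₁ p₂ ≫ biprod.desc i₁ i₂ = g
  rw [biprod.lift_desc, Preadditive.comp_add, reassoc_of% hp₁, reassoc_of% hp₂, hi₁, hi₂,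
    ← Category.assoc, ← Category.assoc, ← Preadditive.add_comp, biprod.total, Category.id_comp]

lemma sumClosed_star {R : Set C} (hrig : Rigid R) (hR : AddClosed R) :
    SumClosed (star R (shiftSet R 1)) := by
  rintro X Y Z hX hY ⟨pX, pY, iX, iY, -, -, htot⟩
  exact (summandClosed_star hrig hR).mem_of_retract
    ⟨biprod.lift pX pY, biprod.desc iX iY, by rw [biprod.lift_desc, htot]⟩
    (biprod_mem_star hR hX hY)

theorem statement_1_general (R : Set C)
    (hrig : Rigid R) (haddR : AddClosed R) :
    SumClosed (star R (shiftSet R 1)) ∧ SummandClosed (star R (shiftSet R 1)) ∧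
      IsoClosed (star R (shiftSet R 1)) :=
  ⟨sumClosed_star hrig haddR, summandClosed_star hrig haddR,
    (summandClosed_star hrig haddR).isoClosed⟩

theorem statement_1 (hKS : KrullSchmidtCat C) (R : Set C)
    (hrig : Rigid R) (haddR : AddClosed R) :
    SumClosed (star R (shiftSet R 1)) ∧ SummandClosed (star R (shiftSet R 1)) ∧
      IsoClosed (star R (shiftSet R 1)) :=
  statement_1_general R hrig haddR

end RelCT
end

section
/- Let R be a rigid subcategory of a triangulated category C and let R -> A -> B -> R[1] be a triangle with R in R. Then A lies in R * R[1] if and only if B lies in R * R[1]. -/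
open CategoryTheory CategoryTheory.Limits CategoryTheory.Pretriangulated

universe v u w

namespace RelCT

variable {C : Type u} [Category.{v} C] [Preadditive C] [HasZeroObject C]
  [HasShift C ℤ] [∀ n : ℤ, (CategoryTheory.shiftFunctor C n).Additive] [Pretriangulated C]

/-! By rigidity, the composite `R₀ → A → X ≅ R₂[1]` (resp. `R₁ → B → R₀[1]`) vanishes, so it
factors through `B` (resp. `A`). The fibre `W` of `B → X ⊞ R₀[1]` (resp. the cone `V` of
`R₀ ⊞ R₁ → A`) then gives the required triangle, provided `W ∈ R` (resp. `V ∈ R[1]`). A diagram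
chase yields an endomorphism of `W` that factors through `R₁` and fixes `W → B` (resp. of `V`,
factoring through `X` and fixing `A → V`). By exactness it differs from the identity by a map
through `(X ⊞ R₀[1])[-1]` (resp. `(R₀ ⊞ R₁)[1]`), so `W` (resp. `V`) is a direct summand of an
object of `R` (resp. `R[1]`). This way the octahedral axiom is never needed. -/

section

variable {𝒞 : Type*} [Category 𝒞]

lemma shift_mem_shiftSet [HasShift 𝒞 ℤ] {R : Set 𝒞} {X : 𝒞} (hX : X ∈ R) (n : ℤ) :
    X⟦n⟧ ∈ shiftSet R n :=
  ⟨X, hX, ⟨Iso.refl _⟩⟩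

variable [Preadditive 𝒞]

noncomputable def retractBiprodOfIdEq {X Y Z : 𝒞} [HasBinaryBiproduct Y Z] (i₁ : X ⟶ Y)
    (r₁ : Y ⟶ X) (i₂ : X ⟶ Z) (r₂ : Z ⟶ X) (h : i₁ ≫ r₁ + i₂ ≫ r₂ = 𝟙 X) : Retract X (Y ⊞ Z) where
  i := biprod.lift i₁ i₂
  r := biprod.desc r₁ r₂
  retract := by rw [biprod.lift_desc, h]

lemma addClosure.map (F : 𝒞 ⥤ 𝒞) [F.Additive] {D E : Set 𝒞} (hDE : ∀ X ∈ D, F.obj X ∈ E)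
    {X : 𝒞} (hX : addClosure D X) : addClosure E (F.obj X) := by
  induction hX with
  | of hX => exact .of (hDE _ hX)
  | zero hX => exact .zero (F.map_isZero hX)
  | sum _ _ hsum ihX ihY =>
    obtain ⟨pX, pY, iX, iY, hX, hY, hid⟩ := hsum
    refine .sum ihX ihY ⟨F.map pX, F.map pY, F.map iX, F.map iY, ?_, ?_, ?_⟩
    · rw [← F.map_comp, hX, F.map_id]
    · rw [← F.map_comp, hY, F.map_id]
    · rw [← F.map_comp, ← F.map_comp, ← F.map_add, hid, F.map_id]
  | smd _ hsplit ih =>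
    obtain ⟨s, r, hsr⟩ := hsplit
    exact .smd ih ⟨F.map s, F.map r, by rw [← F.map_comp, hsr, F.map_id]⟩

namespace AddClosed

variable {D : Set 𝒞}

lemma mem_of_retract (hD : AddClosed D) {X Y : 𝒞} (e : Retract X Y) (hY : Y ∈ D) : X ∈ D :=
  hD X (.smd (.of hY) ⟨e.i, e.r, e.retract⟩)

lemma mem_of_iso (hD : AddClosed D) {X Y : 𝒞} (e : X ≅ Y) (hX : X ∈ D) : Y ∈ D :=
  hD.mem_of_retract ⟨e.inv, e.hom, e.inv_hom_id⟩ hX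

lemma biprod_mem_s2 (hD : AddClosed D) {X Y : 𝒞} [HasBinaryBiproduct X Y] (hX : X ∈ D)
    (hY : Y ∈ D) : (X ⊞ Y) ∈ D :=
  hD _ (.sum (.of hX) (.of hY) ⟨biprod.fst, biprod.snd, biprod.inl, biprod.inr,
    biprod.inl_fst, biprod.inr_snd, biprod.total⟩)

end AddClosed

section Shift

variable [HasShift 𝒞 ℤ]

lemma mem_shiftSet_one_iff {R : Set 𝒞} (hR : AddClosed R) {X : 𝒞} :
    X ∈ shiftSet R 1 ↔ X⟦(-1 : ℤ)⟧ ∈ R := by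
  constructor
  · rintro ⟨Y, hY, ⟨e⟩⟩
    exact hR.mem_of_iso (((shiftFunctorCompIsoId 𝒞 (1 : ℤ) (-1) (by norm_num)).app Y).symm ≪≫
      ((shiftFunctor 𝒞 (-1 : ℤ)).mapIso e).symm) hY
  · intro hX
    exact ⟨_, hX, ⟨((shiftFunctorCompIsoId 𝒞 (-1 : ℤ) 1 (by norm_num)).app X).symm⟩⟩

lemma AddClosed.shiftSet_one [∀ n : ℤ, (shiftFunctor 𝒞 n).Additive] {R : Set 𝒞}
    (hR : AddClosed R) : AddClosed (shiftSet R 1) :=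
  fun _ hX => (mem_shiftSet_one_iff hR).2 <|
    hR _ (hX.map (shiftFunctor 𝒞 (-1 : ℤ)) fun _ hY => (mem_shiftSet_one_iff hR).1 hY)

lemma Rigid.eq_zero_of_mem_shiftSet_s2 {R : Set 𝒞} (hR : Rigid R) {A X : 𝒞} (hA : A ∈ R)
    (hX : X ∈ shiftSet R 1) (φ : A ⟶ X) : φ = 0 := by
  obtain ⟨Y, hY, ⟨e⟩⟩ := hX
  simpa using hR hA hY (φ ≫ e.hom) =≫ e.inv

end Shift

end

namespace Triangle

variable {T : Triangle C}

lemma nonempty_retract_obj₂_of_comp_mor₂ (hT : T ∈ distTriang C) {Y : C} (i : T.obj₂ ⟶ Y)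
    (r : Y ⟶ T.obj₂) (h : i ≫ r ≫ T.mor₂ = T.mor₂) : Nonempty (Retract T.obj₂ (Y ⊞ T.obj₁)) := by
  obtain ⟨ζ, hζ⟩ := Triangle.coyoneda_exact₂ T hT (i ≫ r - 𝟙 _)
    (by rw [Preadditive.sub_comp, Category.assoc, h, Category.id_comp, sub_self])
  exact ⟨retractBiprodOfIdEq i r (-ζ) T.mor₁ (by rw [Preadditive.neg_comp, ← hζ]; abel)⟩

lemma nonempty_retract_obj₂_of_mor₁_comp (hT : T ∈ distTriang C) {Y : C} (i : T.obj₂ ⟶ Y)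
    (r : Y ⟶ T.obj₂) (h : T.mor₁ ≫ i ≫ r = T.mor₁) : Nonempty (Retract T.obj₂ (Y ⊞ T.obj₃)) := by
  obtain ⟨ζ, hζ⟩ := Triangle.yoneda_exact₂ T hT (i ≫ r - 𝟙 _)
    (by rw [Preadditive.comp_sub, h, Category.comp_id, sub_self])
  exact ⟨retractBiprodOfIdEq i r (-T.mor₂) ζ (by rw [Preadditive.neg_comp, ← hζ]; abel)⟩

end Triangle

lemma mem_star_obj₃_of_mem_star_obj₂ {R : Set C} (hrig : Rigid R) (haddR : AddClosed R)
    {R₀ A B : C} (hR₀ : R₀ ∈ R) {f : R₀ ⟶ A} {g : A ⟶ B} {h : B ⟶ R₀⟦(1 : ℤ)⟧}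
    (hT : Triangle.mk f g h ∈ distTriang C) (hA : A ∈ star R (shiftSet R 1)) :
    B ∈ star R (shiftSet R 1) := by
  obtain ⟨R₁, X, a, b, c, hR₁, hX, hTA⟩ := hA
  obtain ⟨t, ht⟩ : ∃ t : B ⟶ X, b = g ≫ t :=
    Triangle.yoneda_exact₂ _ hT b (hrig.eq_zero_of_mem_shiftSet_s2 hR₀ hX _)
  obtain ⟨W, w, δ, hTw⟩ := distinguished_cocone_triangle₁ (biprod.lift t h)
  have hw : w ≫ biprod.lift t h = 0 := comp_distTriang_mor_zero₁₂ _ hTw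
  have hwt : w ≫ t = 0 := by simpa using hw =≫ biprod.fst
  have hwh : w ≫ h = 0 := by simpa using hw =≫ biprod.snd
  obtain ⟨w', hw'⟩ : ∃ w' : W ⟶ A, w = w' ≫ g := Triangle.coyoneda_exact₃ _ hT w hwh
  have hw'b : w' ≫ b = 0 := by rw [ht, ← Category.assoc, ← hw', hwt]
  obtain ⟨β, hβ⟩ : ∃ β : W ⟶ R₁, w' = β ≫ a := Triangle.coyoneda_exact₂ _ hTA w' hw'b
  have hab : a ≫ b = 0 := comp_distTriang_mor_zero₁₂ _ hTA
  have hgh : g ≫ h = 0 := comp_distTriang_mor_zero₂₃ _ hT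
  have hag : (a ≫ g) ≫ biprod.lift t h = 0 := by
    apply biprod.hom_ext
    · simp only [Category.assoc, biprod.lift_fst, ← ht, hab, zero_comp]
    · simp only [Category.assoc, biprod.lift_snd, hgh, comp_zero, zero_comp]
  obtain ⟨α, hα⟩ : ∃ α : R₁ ⟶ W, a ≫ g = α ≫ w := Triangle.coyoneda_exact₂ _ hTw (a ≫ g) hag
  have hS : (X ⊞ R₀⟦(1 : ℤ)⟧) ∈ shiftSet R 1 :=
    haddR.shiftSet_one.biprod_mem_s2 hX (shift_mem_shiftSet hR₀ 1)
  have hβα : β ≫ α ≫ w = w := by rw [← hα, ← Category.assoc, ← hβ, ← hw']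
  obtain ⟨e⟩ :=
    Triangle.nonempty_retract_obj₂_of_comp_mor₂ (inv_rot_of_distTriang _ hTw) β α hβα
  exact ⟨W, _, w, _, δ,
    haddR.mem_of_retract e (haddR.biprod_mem_s2 hR₁ ((mem_shiftSet_one_iff haddR).1 hS)), hS, hTw⟩

lemma mem_star_obj₂_of_mem_star_obj₃ {R : Set C} (hrig : Rigid R) (haddR : AddClosed R)
    {R₀ A B : C} (hR₀ : R₀ ∈ R) {f : R₀ ⟶ A} {g : A ⟶ B} {h : B ⟶ R₀⟦(1 : ℤ)⟧}
    (hT : Triangle.mk f g h ∈ distTriang C) (hB : B ∈ star R (shiftSet R 1)) :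
    A ∈ star R (shiftSet R 1) := by
  obtain ⟨R₁, X, a, b, c, hR₁, hX, hTB⟩ := hB
  obtain ⟨a', ha'⟩ : ∃ a' : R₁ ⟶ A, a = a' ≫ g := Triangle.coyoneda_exact₃ _ hT a
    (hrig.eq_zero_of_mem_shiftSet_s2 hR₁ (shift_mem_shiftSet hR₀ 1) _)
  obtain ⟨V, u, v, hTV⟩ := distinguished_cocone_triangle (biprod.desc f a')
  have hu : biprod.desc f a' ≫ u = 0 := comp_distTriang_mor_zero₁₂ _ hTV
  have hfu : f ≫ u = 0 := by simpa using biprod.inl ≫= hu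
  have ha'u : a' ≫ u = 0 := by simpa using biprod.inr ≫= hu
  obtain ⟨u', hu'⟩ : ∃ u' : B ⟶ V, u = g ≫ u' := Triangle.yoneda_exact₂ _ hT u hfu
  have hau' : a ≫ u' = 0 := by rw [ha', Category.assoc, ← hu', ha'u]
  obtain ⟨ρ, hρ⟩ : ∃ ρ : X ⟶ V, u' = b ≫ ρ := Triangle.yoneda_exact₂ _ hTB u' hau'
  have hab : a ≫ b = 0 := comp_distTriang_mor_zero₁₂ _ hTB
  have hfg : f ≫ g = 0 := comp_distTriang_mor_zero₁₂ _ hT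
  have hgb : biprod.desc f a' ≫ g ≫ b = 0 := by
    apply biprod.hom_ext'
    · rw [biprod.inl_desc_assoc, ← Category.assoc, hfg, zero_comp, comp_zero]
    · rw [biprod.inr_desc_assoc, ← Category.assoc, ← ha', hab, comp_zero]
  obtain ⟨χ, hχ⟩ : ∃ χ : V ⟶ X, g ≫ b = u ≫ χ := Triangle.yoneda_exact₂ _ hTV (g ≫ b) hgb
  have huχρ : u ≫ χ ≫ ρ = u := by rw [← Category.assoc, ← hχ, Category.assoc, ← hρ, ← hu']
  obtain ⟨e⟩ :=
    Triangle.nonempty_retract_obj₂_of_mor₁_comp (rot_of_distTriang _ hTV) χ ρ huχρ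
  have hR₀₁ : (R₀ ⊞ R₁) ∈ R := haddR.biprod_mem_s2 hR₀ hR₁
  exact ⟨_, V, _, u, v, hR₀₁, haddR.shiftSet_one.mem_of_retract e
    (haddR.shiftSet_one.biprod_mem_s2 hX (shift_mem_shiftSet hR₀₁ 1)), hTV⟩

theorem statement_2 (R : Set C) (hrig : Rigid R) (haddR : AddClosed R)
    {R₀ A B : C} (hR₀ : R₀ ∈ R) (f : R₀ ⟶ A) (g : A ⟶ B) (h : B ⟶ R₀⟦(1:ℤ)⟧)
    (hT : Triangle.mk f g h ∈ distTriang C) :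
    A ∈ star R (shiftSet R 1) ↔ B ∈ star R (shiftSet R 1) := by
  exact ⟨mem_star_obj₃_of_mem_star_obj₂ hrig haddR hR₀ hT,
    mem_star_obj₂_of_mem_star_obj₃ hrig haddR hR₀ hT⟩

end RelCT
end

section
/- Let R be a rigid subcategory of C and let X be an R[1]-rigid subcategory. Then X ∩ R[1] is contained in R(X)[1], where R(X) = { R ∈ R : Hom_C(R, X) = 0 }. Moreover, if X is two-term maximal R[1]-rigid, then X ∩ R[1] = R(X)[1]. -/
open CategoryTheory CategoryTheory.Limits CategoryTheory.Pretriangulated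

universe v u w

namespace RelCT

variable {C : Type u} [Category.{v} C] [Preadditive C] [HasZeroObject C]
  [HasShift C ℤ] [∀ n : ℤ, (CategoryTheory.shiftFunctor C n).Additive] [Pretriangulated C]

open ZeroObject

lemma factors_post {D : Set C} {A B B' : C} {f : A ⟶ B} (v : B ⟶ B')
    (h : Factors D f) : Factors D (f ≫ v) := by
  obtain ⟨Z, g, h', hZ, rfl⟩ := h
  exact ⟨Z, g, h' ≫ v, hZ, by simp⟩

lemma factors_pre {D : Set C} {A A' B : C} (u : A' ⟶ A) {f : A ⟶ B}
    (h : Factors D f) : Factors D (u ≫ f) := by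
  obtain ⟨Z, g, h', hZ, rfl⟩ := h
  exact ⟨Z, u ≫ g, h', hZ, by simp⟩

lemma vanish_target {R S : Set C} {P : C}
    (base : ∀ B ∈ S, ∀ f : P ⟶ B⟦(1:ℤ)⟧, Factors (shiftSet R 1) f → f = 0) :
    ∀ Q : C, addClosure S Q → ∀ f : P ⟶ Q⟦(1:ℤ)⟧, Factors (shiftSet R 1) f → f = 0 := by
  intro Q hQ
  induction hQ with
  | of h => exact base _ h
  | zero h =>
      intro f _
      have h1 : (𝟙 _ : _ ⟶ _) = (0 : _ ⟶ _) := h.eq_of_src _ _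
      calc f = f ≫ (shiftFunctor C (1:ℤ)).map (𝟙 _) := by simp
        _ = 0 := by rw [h1]; simp
  | sum _ _ hdata ihX ihY =>
      obtain ⟨pX, pY, iX, iY, _, _, h3⟩ := hdata
      intro f hf
      have key : f ≫ (shiftFunctor C (1:ℤ)).map (pX ≫ iX + pY ≫ iY) = f := by
        rw [h3]; simp
      rw [← key, Functor.map_add, Preadditive.comp_add, Functor.map_comp, Functor.map_comp,
        ← Category.assoc, ← Category.assoc,
        ihX _ (factors_post _ hf), ihY _ (factors_post _ hf)]
      simp
  | smd _ hdata ih =>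
      obtain ⟨s, r, hsr⟩ := hdata
      intro f hf
      have key : f ≫ (shiftFunctor C (1:ℤ)).map (s ≫ r) = f := by rw [hsr]; simp
      rw [← key, Functor.map_comp, ← Category.assoc, ih _ (factors_post _ hf)]
      simp

lemma vanish_source {R S : Set C} {Q : C}
    (base : ∀ A ∈ S, ∀ f : A ⟶ Q⟦(1:ℤ)⟧, Factors (shiftSet R 1) f → f = 0) :
    ∀ P : C, addClosure S P → ∀ f : P ⟶ Q⟦(1:ℤ)⟧, Factors (shiftSet R 1) f → f = 0 := by
  intro P hP
  induction hP with
  | of h => exact base _ h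
  | zero h =>
      intro f _
      have h1 : (𝟙 _ : _ ⟶ _) = (0 : _ ⟶ _) := h.eq_of_src _ _
      calc f = 𝟙 _ ≫ f := by simp
        _ = 0 := by rw [h1]; simp
  | sum _ _ hdata ihX ihY =>
      obtain ⟨pX, pY, iX, iY, _, _, h3⟩ := hdata
      intro f hf
      have key : (pX ≫ iX + pY ≫ iY) ≫ f = f := by rw [h3]; simp
      rw [← key, Preadditive.add_comp, Category.assoc, Category.assoc,
        ihX _ (factors_pre _ hf), ihY _ (factors_pre _ hf)]
      simp
  | smd _ hdata ih =>
      obtain ⟨s, r, hsr⟩ := hdata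
      intro f hf
      have key : (s ≫ r) ≫ f = f := by rw [hsr]; simp
      rw [← key, Category.assoc, ih _ (factors_pre _ hf)]
      simp

lemma vanish_both {R S : Set C}
    (base : ∀ A ∈ S, ∀ B ∈ S, ∀ f : A ⟶ B⟦(1:ℤ)⟧, Factors (shiftSet R 1) f → f = 0) :
    RelRigid R {Z | addClosure S Z} {Z | addClosure S Z} := by
  intro P Q hP hQ f hf
  exact vanish_source
    (fun A hA g hg => vanish_target (base A hA) Q hQ g hg) P hP f hf

theorem statement_3 (hKS : KrullSchmidtCat C) (R X : Set C)
    (hrig : Rigid R) (haddR : AddClosed R) (haddX : AddClosed X)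
    (hX : RelRigid R X X) :
    X ∩ shiftSet R 1 ⊆ shiftSet (RZero R X) 1 ∧
      (TwoTermMaximal R X → X ∩ shiftSet R 1 = shiftSet (RZero R X) 1) := by
  have part1 : X ∩ shiftSet R 1 ⊆ shiftSet (RZero R X) 1 := by
    rintro A ⟨hAX, R₀, hR₀, ⟨e⟩⟩
    refine ⟨R₀, ⟨hR₀, fun B hB f => ?_⟩, ⟨e⟩⟩
    have hfac : Factors (shiftSet R 1) (e.hom ≫ (shiftFunctor C (1:ℤ)).map f) :=
      ⟨R₀⟦(1:ℤ)⟧, e.hom, (shiftFunctor C (1:ℤ)).map f, ⟨R₀, hR₀, ⟨Iso.refl _⟩⟩, rfl⟩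
    have h0 : e.hom ≫ (shiftFunctor C (1:ℤ)).map f = 0 := hX hAX hB _ hfac
    have h1 : (shiftFunctor C (1:ℤ)).map f = 0 := by
      rw [← Iso.inv_hom_id_assoc e ((shiftFunctor C (1:ℤ)).map f), h0, comp_zero]
    exact (shiftFunctor C (1:ℤ)).map_injective (by simpa using h1)
  refine ⟨part1, fun hmax => Set.Subset.antisymm part1 ?_⟩
  rintro A ⟨R₀, ⟨hR₀R, hR₀zero⟩, ⟨e⟩⟩
  have hAshift : A ∈ shiftSet R 1 := ⟨R₀, hR₀R, ⟨e⟩⟩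
  refine Set.mem_inter ?_ hAshift
  -- A ∈ X by maximality
  have hzero : (0 : C) ∈ R := haddR _ (addClosure.zero (isZero_zero C))
  have hstar : A ∈ star R (shiftSet R 1) :=
    ⟨0, A, 0, 𝟙 A, 0, hzero, hAshift, contractible_distinguished₁ A⟩
  refine hmax.2 A hstar (vanish_both ?_)
  rintro P (rfl | hP) Q (rfl | hQ) f hf
  · -- P = A, Q = A
    have h0 : (shiftFunctor C (1:ℤ)).preimage
        (e.inv ≫ f ≫ (shiftFunctor C (1:ℤ)).map e.hom) = 0 :=
      hrig hR₀R hR₀R _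
    have h1 : e.inv ≫ f ≫ (shiftFunctor C (1:ℤ)).map e.hom = 0 := by
      rw [← (shiftFunctor C (1:ℤ)).map_preimage
        (e.inv ≫ f ≫ (shiftFunctor C (1:ℤ)).map e.hom), h0, Functor.map_zero]
    calc f = e.hom ≫ (e.inv ≫ f ≫ (shiftFunctor C (1:ℤ)).map e.hom) ≫
          (shiftFunctor C (1:ℤ)).map e.inv := by
          simp [← Functor.map_comp]
      _ = 0 := by rw [h1]; simp
  · -- P = A, Q ∈ X
    have h0 : (shiftFunctor C (1:ℤ)).preimage (e.inv ≫ f) = 0 :=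
      hR₀zero _ hQ _
    have h1 : e.inv ≫ f = 0 := by
      rw [← (shiftFunctor C (1:ℤ)).map_preimage (e.inv ≫ f), h0, Functor.map_zero]
    calc f = e.hom ≫ (e.inv ≫ f) := by simp
      _ = 0 := by rw [h1]; simp
  · -- P ∈ X, Q = A
    obtain ⟨Z, g, h, ⟨R', hR', ⟨i⟩⟩, rfl⟩ := hf
    have h0 : (shiftFunctor C (1:ℤ)).preimage
        (i.inv ≫ h ≫ (shiftFunctor C (1:ℤ)).map e.hom) = 0 :=
      hrig hR' hR₀R _
    have h1 : i.inv ≫ h ≫ (shiftFunctor C (1:ℤ)).map e.hom = 0 := by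
      rw [← (shiftFunctor C (1:ℤ)).map_preimage
        (i.inv ≫ h ≫ (shiftFunctor C (1:ℤ)).map e.hom), h0, Functor.map_zero]
    have h2 : h = i.hom ≫ (i.inv ≫ h ≫ (shiftFunctor C (1:ℤ)).map e.hom) ≫
        (shiftFunctor C (1:ℤ)).map e.inv := by
      simp [← Functor.map_comp]
    rw [h2, h1]; simp
  · -- P ∈ X, Q ∈ X
    exact hX hP hQ f hf

end RelCT
end

section
/- Let X be a two-term R[1]-rigid subcategory with X ∩ R[1] = R(X)[1]. Then for any two-term maximal R[1]-rigid subcategory M containing X, one has R(X) = R(M). -/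
open CategoryTheory CategoryTheory.Limits CategoryTheory.Pretriangulated

universe v u w

namespace RelCT

variable {C : Type u} [Category.{v} C] [Preadditive C] [HasZeroObject C]
  [HasShift C ℤ] [∀ n : ℤ, (CategoryTheory.shiftFunctor C n).Additive] [Pretriangulated C]

theorem statement_4 (hKS : KrullSchmidtCat C) (R X M : Set C)
    (hrig : Rigid R) (haddR : AddClosed R) (haddX : AddClosed X) (haddM : AddClosed M)
    (hX : TwoTermRigid R X)
    (hcap : X ∩ shiftSet R 1 = shiftSet (RZero R X) 1)
    (hM : TwoTermMaximal R M) (hXM : X ⊆ M) :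
    RZero R X = RZero R M := by
  ext A
  constructor
  · rintro ⟨hAR, hA0⟩
    refine ⟨hAR, fun B hB f => ?_⟩
    have hA1X : A⟦(1:ℤ)⟧ ∈ X := by
      have h1 : A⟦(1:ℤ)⟧ ∈ shiftSet (RZero R X) 1 := ⟨A, ⟨hAR, hA0⟩, ⟨Iso.refl _⟩⟩
      rw [← hcap] at h1
      exact h1.1
    have hA1M : A⟦(1:ℤ)⟧ ∈ M := hXM hA1X
    have hfac : Factors (shiftSet R 1) ((shiftFunctor C (1:ℤ)).map f) :=
      ⟨A⟦(1:ℤ)⟧, 𝟙 _, (shiftFunctor C (1:ℤ)).map f, ⟨A, hAR, ⟨Iso.refl _⟩⟩,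
        (Category.id_comp _).symm⟩
    have hz := hM.1.1 hA1M hB ((shiftFunctor C (1:ℤ)).map f) hfac
    have hz' : (shiftFunctor C (1:ℤ)).map f = (shiftFunctor C (1:ℤ)).map 0 := by
      simpa using hz
    exact (shiftFunctor C (1:ℤ)).map_injective hz'
  · rintro ⟨hAR, hA0⟩
    exact ⟨hAR, fun B hB f => hA0 B (hXM hB) f⟩

end RelCT
end

section
/- Let U, V be subcategories of R * R[1]. Then [R[1]](U, V[1]) = 0 if and only if every object U ∈ U admits a triangle R1 --f--> R2 -> U -> R1[1] with R1, R2 ∈ R such that Hom_C(f, V) : Hom(R2, V) -> Hom(R1, V) is surjective for every V ∈ V. -/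
open CategoryTheory CategoryTheory.Limits CategoryTheory.Pretriangulated

universe v u w

namespace RelCT

variable {C : Type u} [Category.{v} C] [Preadditive C] [HasZeroObject C]
  [HasShift C ℤ] [∀ n : ℤ, (CategoryTheory.shiftFunctor C n).Additive] [Pretriangulated C]

lemma _root_.CategoryTheory.Pretriangulated.Triangle.yoneda_exact₁ (T : Triangle C)
    (hT : T ∈ distTriang C) {X : C} (f : T.obj₁ ⟶ X) (hf : T.mor₃ ≫ f⟦(1 : ℤ)⟧' = 0) :
    ∃ g : T.obj₂ ⟶ X, f = T.mor₁ ≫ g := by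
  obtain ⟨ψ, hψ⟩ : ∃ ψ : T.obj₂⟦(1 : ℤ)⟧ ⟶ X⟦(1 : ℤ)⟧, f⟦(1 : ℤ)⟧' = T.rotate.mor₃ ≫ ψ :=
    Triangle.yoneda_exact₃ _ (rot_of_distTriang _ hT) (f⟦(1 : ℤ)⟧') hf
  refine ⟨-(shiftFunctor C (1 : ℤ)).preimage ψ, (shiftFunctor C (1 : ℤ)).map_injective ?_⟩
  rw [hψ, Functor.map_comp, Functor.map_neg, Functor.map_preimage, Preadditive.comp_neg]
  exact Preadditive.neg_comp _ _

lemma exists_distTriang_of_mem_star_shiftSet {X Y : Set C} {M : C}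
    (hM : M ∈ star X (shiftSet Y 1)) :
    ∃ (Y₀ X₀ : C) (f : Y₀ ⟶ X₀) (u₁ : X₀ ⟶ M) (u₂ : M ⟶ Y₀⟦(1 : ℤ)⟧),
      Y₀ ∈ Y ∧ X₀ ∈ X ∧ Triangle.mk f u₁ u₂ ∈ distTriang C := by
  obtain ⟨X₀, B, a, b, c, hX₀, ⟨Y₀, hY₀, ⟨e⟩⟩, hT⟩ := hM
  -- chosen so that rotating `Y₀ → X₀ → M → Y₀[1]` gives the triangle `(a, b, c)` up to `e`
  let f : Y₀ ⟶ X₀ := -(shiftFunctor C (1 : ℤ)).preimage (e.inv ≫ c)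
  refine ⟨Y₀, X₀, f, a, b ≫ e.hom, hY₀, hX₀, ?_⟩
  rw [rotate_distinguished_triangle]
  refine isomorphic_distinguished _ hT _ (Triangle.isoMk _ _ (Iso.refl _) (Iso.refl _) e.symm
    ?_ ?_ ?_)
  · exact (Category.comp_id a).trans (Category.id_comp a).symm
  · change (b ≫ e.hom) ≫ e.inv = 𝟙 M ≫ b
    simp
  · change (-(f⟦(1 : ℤ)⟧')) ≫ (𝟙 X₀)⟦(1 : ℤ)⟧' = e.inv ≫ c
    simp [f]

/-- Since `Hom(R₂, R[1]) = 0`, the maps `U ⟶ V[1]` factoring through `R[1]` are exactly the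
`u₂ ≫ g⟦1⟧'` with `g : R₁ ⟶ V`, and such a map vanishes iff `g` factors through `f`. -/
theorem relRigid_singleton_iff_of_distTriang {R : Set C} (hR : Rigid R) (V : Set C)
    {R₁ R₂ U : C} {f : R₁ ⟶ R₂} {u₁ : R₂ ⟶ U} {u₂ : U ⟶ R₁⟦(1 : ℤ)⟧}
    (hT : Triangle.mk f u₁ u₂ ∈ distTriang C) (hR₁ : R₁ ∈ R) (hR₂ : R₂ ∈ R) :
    RelRigid R {U} V ↔ ∀ Vo ∈ V, ∀ g : R₁ ⟶ Vo, ∃ h : R₂ ⟶ Vo, f ≫ h = g := by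
  constructor
  · intro hrel Vo hVo g
    have hzero : u₂ ≫ g⟦(1 : ℤ)⟧' = 0 :=
      hrel rfl hVo _ ⟨_, u₂, g⟦(1 : ℤ)⟧', ⟨R₁, hR₁, ⟨Iso.refl _⟩⟩, rfl⟩
    obtain ⟨h, hh⟩ := Triangle.yoneda_exact₁ _ hT g hzero
    exact ⟨h, hh.symm⟩
  · rintro hsurj A B rfl hB φ ⟨Z, a, b, ⟨R₀, hR₀, ⟨e⟩⟩, rfl⟩
    have hu₁a : u₁ ≫ a = 0 := by
      rw [← cancel_mono e.hom, zero_comp]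
      exact hR hR₂ hR₀ _
    obtain ⟨k, hk⟩ := Triangle.yoneda_exact₃ _ hT a hu₁a
    obtain ⟨h, hh⟩ := hsurj B hB ((shiftFunctor C (1 : ℤ)).preimage (k ≫ b))
    calc a ≫ b
        = u₂ ≫ (f ≫ h)⟦(1 : ℤ)⟧' := by rw [hk, hh, Functor.map_preimage]; exact Category.assoc _ _ _
      _ = (u₂ ≫ f⟦(1 : ℤ)⟧') ≫ h⟦(1 : ℤ)⟧' := by simp
      _ = 0 := by rw [show u₂ ≫ f⟦(1 : ℤ)⟧' = 0 from comp_distTriang_mor_zero₃₁ _ hT, zero_comp]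

theorem statement_5_general (R U V : Set C)
    (hrig : Rigid R)
    (hU : U ⊆ star R (shiftSet R 1)) :
    RelRigid R U V ↔
      ∀ Uo ∈ U, ∃ (R₁ R₂ : C) (f : R₁ ⟶ R₂) (u₁ : R₂ ⟶ Uo) (u₂ : Uo ⟶ R₁⟦(1:ℤ)⟧),
        R₁ ∈ R ∧ R₂ ∈ R ∧ (Triangle.mk f u₁ u₂ ∈ distTriang C) ∧
        ∀ Vo ∈ V, ∀ g : R₁ ⟶ Vo, ∃ h : R₂ ⟶ Vo, f ≫ h = g := by
  have relRigid_iff_forall_singleton : RelRigid R U V ↔ ∀ Uo ∈ U, RelRigid R {Uo} V :=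
    ⟨fun h _ hUo _ _ hA hB => h (hA ▸ hUo) hB, fun h _ _ hA hB => h _ hA rfl hB⟩
  rw [relRigid_iff_forall_singleton]
  refine forall₂_congr fun Uo hUo => ⟨fun hrel => ?_, ?_⟩
  · obtain ⟨R₁, R₂, f, u₁, u₂, hR₁, hR₂, hT⟩ := exists_distTriang_of_mem_star_shiftSet (hU hUo)
    exact ⟨R₁, R₂, f, u₁, u₂, hR₁, hR₂, hT,
      (relRigid_singleton_iff_of_distTriang hrig V hT hR₁ hR₂).1 hrel⟩
  · rintro ⟨R₁, R₂, f, u₁, u₂, hR₁, hR₂, hT, hsurj⟩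
    exact (relRigid_singleton_iff_of_distTriang hrig V hT hR₁ hR₂).2 hsurj

theorem statement_5 (hKS : KrullSchmidtCat C) (R U V : Set C)
    (hrig : Rigid R) (haddR : AddClosed R)
    (hU : U ⊆ star R (shiftSet R 1)) (hV : V ⊆ star R (shiftSet R 1)) :
    RelRigid R U V ↔
      ∀ Uo ∈ U, ∃ (R₁ R₂ : C) (f : R₁ ⟶ R₂) (u₁ : R₂ ⟶ Uo) (u₂ : Uo ⟶ R₁⟦(1:ℤ)⟧),
        R₁ ∈ R ∧ R₂ ∈ R ∧ (Triangle.mk f u₁ u₂ ∈ distTriang C) ∧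
        ∀ Vo ∈ V, ∀ g : R₁ ⟶ Vo, ∃ h : R₂ ⟶ Vo, f ≫ h = g :=
  statement_5_general R U V hrig hU

end RelCT
end

section
/- Let X be an R[1]-rigid subcategory and L an object admitting a triangle L --x1--> X1 -> X0 --x0--> L[1] with X1, X0 ∈ X. If x0 factors through R[1], then x1 is a left X-approximation of L; moreover L admits a triangle L --x2--> X2 -> X4 --x4--> L[1] with X2, X4 ∈ X, x2 a minimal left X-approximation, and x4 factoring through R[1]. -/
open CategoryTheory CategoryTheory.Limits CategoryTheory.Pretriangulated

universe v u w

namespace RelCT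

variable {C : Type u} [Category.{v} C] [Preadditive C] [HasZeroObject C]
  [HasShift C ℤ] [∀ n : ℤ, (CategoryTheory.shiftFunctor C n).Additive] [Pretriangulated C]

/-!
A map `L ⟶ X'` extends along `x₁` as soon as its shift kills `x₀`; since `x₀` factors through
`R[1]`, relative rigidity kills that composite, so `x₁` is a left approximation.

In a Krull–Schmidt category every `f : L ⟶ M` becomes left minimal after projecting to a suitable
direct summand of `M`: if `f ≫ u = f` with `u` not invertible, then `𝟙 - u` kills `f` and is not
in the radical, so it splits off a local summand of `M` killed by `f`; cancelling it lowers the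
number of local summands. Applied to `x₁` this gives `x₂`, and comparing the triangles on `x₁`
and `x₂` shows that the cone of `x₂` is a direct summand of `X₀` and that `x₄` factors through
`x₀`.
-/

set_option linter.unusedSectionVars false

def LocalObj (A : C) : Prop := ∀ φ : A ⟶ A, IsIso φ ∨ IsIso (𝟙 A - φ)

/-- A weak Krull–Schmidt decomposition of `M` into `n` local pieces: the summands need not be
orthogonal. -/
def IsSumOfLocals (M : C) (n : ℕ) : Prop :=
  ∃ (N : Fin n → C) (p : ∀ i, M ⟶ N i) (ι : ∀ i, N i ⟶ M),
    ∑ i, p i ≫ ι i = 𝟙 M ∧ ∀ i, LocalObj (N i)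

lemma isIso_id_sub_comp_of_isIso_id_sub_comp {P Q : C} (x : P ⟶ Q) (y : Q ⟶ P)
    (h : IsIso (𝟙 Q - y ≫ x)) : IsIso (𝟙 P - x ≫ y) := by
  set v := inv (𝟙 Q - y ≫ x)
  have h₁ : ∀ {Z : C} (k : Q ⟶ Z), y ≫ x ≫ v ≫ k = v ≫ k - k := by
    intro Z k
    have := IsIso.hom_inv_id (𝟙 Q - y ≫ x) =≫ k
    simp only [Preadditive.sub_comp, Category.id_comp, Category.assoc] at this
    linear_combination (norm := abel) -this
  have h₂ : ∀ {Z : C} (k : Q ⟶ Z), v ≫ y ≫ x ≫ k = v ≫ k - k := by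
    intro Z k
    have := IsIso.inv_hom_id (𝟙 Q - y ≫ x) =≫ k
    simp only [Preadditive.comp_sub, Preadditive.sub_comp, Category.id_comp, Category.comp_id,
      Category.assoc] at this
    linear_combination (norm := abel) -this
  refine ⟨𝟙 P + x ≫ v ≫ y, ?_, ?_⟩
  · simp only [Preadditive.sub_comp, Preadditive.comp_add, Category.id_comp, Category.comp_id,
      Category.assoc, h₁, Preadditive.comp_sub]
    abel
  · simp only [Preadditive.add_comp, Preadditive.comp_sub, Category.id_comp, Category.comp_id,
      Category.assoc, h₂, Preadditive.comp_sub]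
    abel

lemma inRadical_zero {A B : C} : InRadical (0 : A ⟶ B) := fun _ => by
  rw [Limits.zero_comp, sub_zero]
  infer_instance

lemma InRadical.comp {A B B' : C} {f : A ⟶ B} (hf : InRadical f) (y : B ⟶ B') :
    InRadical (f ≫ y) :=
  fun g => by simpa only [Category.assoc] using hf (y ≫ g)

lemma InRadical.add {A B : C} {f f' : A ⟶ B} (hf : InRadical f) (hf' : InRadical f') :
    InRadical (f + f') := by
  intro g
  have : IsIso (𝟙 A - f ≫ g) := hf g
  have : IsIso (𝟙 A - f' ≫ g ≫ inv (𝟙 A - f ≫ g)) := hf' _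
  have key : 𝟙 A - (f + f') ≫ g =
      (𝟙 A - f' ≫ g ≫ inv (𝟙 A - f ≫ g)) ≫ (𝟙 A - f ≫ g) := by
    simp only [Preadditive.sub_comp, Category.id_comp, Category.assoc, IsIso.inv_hom_id,
      Category.comp_id, Preadditive.add_comp]
    abel
  rw [key]
  infer_instance

lemma inRadical_sum {A B : C} {ι : Type*} (s : Finset ι) {f : ι → (A ⟶ B)}
    (h : ∀ i ∈ s, InRadical (f i)) : InRadical (∑ i ∈ s, f i) :=
  Finset.sum_induction f InRadical (fun _ _ => InRadical.add) inRadical_zero h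

namespace LocalObj

lemma comp_eq_id_of_comp_eq_id {B N : C} (hN : LocalObj N) (hB : ¬IsZero B)
    {s : B ⟶ N} {r : N ⟶ B} (h : s ≫ r = 𝟙 B) : r ≫ s = 𝟙 N := by
  have hidem : (r ≫ s) ≫ (r ≫ s) = r ≫ s := by simp [reassoc_of% h]
  rcases hN (r ≫ s) with hiso | hiso
  · exact (cancel_epi (r ≫ s)).1 (by rw [hidem, Category.comp_id])
  · have hzero : r ≫ s = 0 :=
      (cancel_mono (𝟙 N - r ≫ s)).1 (by rw [Preadditive.comp_sub, hidem]; simp)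
    refine absurd ((IsZero.iff_id_eq_zero B).2 ?_) hB
    calc 𝟙 B = (s ≫ r) ≫ (s ≫ r) := by rw [h, Category.comp_id]
      _ = s ≫ (r ≫ s) ≫ r := by simp only [Category.assoc]
      _ = 0 := by rw [hzero, Limits.zero_comp, Limits.comp_zero]

lemma inRadical_of_not_isIso {B : C} (hB : LocalObj B) (hB₀ : ¬IsZero B) {φ : B ⟶ B}
    (hφ : ¬IsIso φ) : InRadical φ := fun g =>
  (hB (φ ≫ g)).resolve_left fun _ => by
    have h : φ ≫ g ≫ inv (φ ≫ g) = 𝟙 B := by rw [← Category.assoc, IsIso.hom_inv_id]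
    exact hφ ⟨_, h, hB.comp_eq_id_of_comp_eq_id hB₀ h⟩

lemma exists_isIso_of_isIso_sum {B : C} (hB : LocalObj B) (hB₀ : ¬IsZero B) {ι : Type*}
    (s : Finset ι) (f : ι → (B ⟶ B)) (h : IsIso (∑ i ∈ s, f i)) : ∃ i ∈ s, IsIso (f i) := by
  by_contra! hf
  have := inRadical_sum s (fun i hi => hB.inRadical_of_not_isIso hB₀ (hf i hi))
    (inv (∑ i ∈ s, f i))
  rw [IsIso.hom_inv_id, sub_self] at this
  exact hB₀ ((isIsoZero_iff_source_target_isZero B B).1 this).1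

lemma exists_isIso_comp_of_not_inRadical {M B : C} (hB : LocalObj B) {f : M ⟶ B}
    (hf : ¬InRadical f) : ∃ g : B ⟶ M, IsIso (g ≫ f) := by
  simp only [InRadical, not_forall] at hf
  obtain ⟨g, hg⟩ := hf
  exact ⟨g, (hB (g ≫ f)).resolve_right fun h => hg (isIso_id_sub_comp_of_isIso_id_sub_comp f g h)⟩

end LocalObj

namespace IsSumOfLocals

lemma exists_local_retract {L M : C} {n : ℕ} (hM : IsSumOfLocals M n) {f : L ⟶ M}
    (hf : ¬LeftMinimal f) :
    ∃ (B : C) (e : Retract B M), LocalObj B ∧ ¬IsZero B ∧ f ≫ e.r = 0 := by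
  obtain ⟨N, p, ι, hsum, hloc⟩ := hM
  simp only [LeftMinimal, not_forall] at hf
  obtain ⟨u, hfu, hu⟩ := hf
  have hw : ¬InRadical (𝟙 M - u) := fun h => hu (by simpa using h (𝟙 M))
  obtain ⟨k, hk⟩ : ∃ k, ¬InRadical ((𝟙 M - u) ≫ p k) := by
    by_contra! hk
    refine hw ?_
    have hw_sum : 𝟙 M - u = ∑ k, ((𝟙 M - u) ≫ p k) ≫ ι k := by
      simp only [Category.assoc, ← Preadditive.comp_sum, hsum, Category.comp_id]
    rw [hw_sum]
    exact inRadical_sum _ fun k _ => (hk k).comp _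
  obtain ⟨g, hg⟩ := (hloc k).exists_isIso_comp_of_not_inRadical hk
  refine ⟨N k, ⟨g, (𝟙 M - u) ≫ p k ≫ inv (g ≫ (𝟙 M - u) ≫ p k), ?_⟩, hloc k, fun h0 => hk ?_, ?_⟩
  · simp only [← Category.assoc, IsIso.hom_inv_id]
  · rw [h0.eq_of_tgt ((𝟙 M - u) ≫ p k) 0]
    exact inRadical_zero
  · rw [← Category.assoc, Preadditive.comp_sub, Category.comp_id, hfu, sub_self,
      Limits.zero_comp]

lemma of_complement {M A B : C} {n : ℕ} (hM : IsSumOfLocals M (n + 1))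
    (eA : Retract A M) (eB : Retract B M) (hAB : eA.i ≫ eB.r = 0) (hB : LocalObj B)
    (hB₀ : ¬IsZero B) : IsSumOfLocals A n := by
  obtain ⟨N, p, ι, hsum, hloc⟩ := hM
  have hB_sum : IsIso (∑ i, (eB.i ≫ p i) ≫ ι i ≫ eB.r) := by
    have : ∑ i, (eB.i ≫ p i) ≫ ι i ≫ eB.r = eB.i ≫ (∑ i, p i ≫ ι i) ≫ eB.r := by
      simp only [Preadditive.comp_sum, Preadditive.sum_comp, Category.assoc]
    rw [this, hsum, Category.id_comp, eB.retract]
    infer_instance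
  obtain ⟨i₀, -, hi₀⟩ := hB.exists_isIso_of_isIso_sum hB₀ _ _ hB_sum
  set s := eB.i ≫ p i₀
  set r := ι i₀ ≫ eB.r ≫ inv (s ≫ ι i₀ ≫ eB.r)
  have hsr : s ≫ r = 𝟙 B := by simp only [r, ← Category.assoc, IsIso.hom_inv_id]
  have hrs : r ≫ s = 𝟙 (N i₀) := (hloc i₀).comp_eq_id_of_comp_eq_id hB₀ hsr
  -- `d ≫ eB.i` squares to zero, so `θ` is invertible; it moves `A` off the summand `N i₀`.
  set d : M ⟶ B := p i₀ ≫ r - eB.r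
  have hd : eB.i ≫ d = 0 := by simp only [d, Preadditive.comp_sub, ← Category.assoc, hsr, s,
    eB.retract, sub_self]
  set θ := 𝟙 M - d ≫ eB.i
  set θ' := 𝟙 M + d ≫ eB.i
  have hθ : θ ≫ θ' = 𝟙 M := by
    simp only [θ, θ', Preadditive.sub_comp, Preadditive.comp_add, Category.id_comp,
      Category.comp_id, Category.assoc, reassoc_of% hd, Limits.zero_comp, Limits.comp_zero]
    abel
  have hAθ : eA.i ≫ θ ≫ p i₀ = 0 := by
    have : eA.i ≫ d = eA.i ≫ p i₀ ≫ r := by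
      simp only [d, Preadditive.comp_sub, hAB, sub_zero]
    have hrs' : r ≫ eB.i ≫ p i₀ = 𝟙 _ := hrs
    simp only [θ, Preadditive.sub_comp, Preadditive.comp_sub, Category.id_comp, Category.assoc,
      reassoc_of% this, hrs', Category.comp_id, sub_self]
  have hrest : ∑ k, p (i₀.succAbove k) ≫ ι (i₀.succAbove k) = 𝟙 M - p i₀ ≫ ι i₀ := by
    rw [← hsum, Fin.sum_univ_succAbove _ i₀, add_sub_cancel_left]
  refine ⟨fun k => N (i₀.succAbove k), fun k => eA.i ≫ θ ≫ p _, fun k => ι _ ≫ θ' ≫ eA.r,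
    ?_, fun k => hloc _⟩
  calc ∑ k, (eA.i ≫ θ ≫ p (i₀.succAbove k)) ≫ ι (i₀.succAbove k) ≫ θ' ≫ eA.r
      = eA.i ≫ θ ≫ (∑ k, p (i₀.succAbove k) ≫ ι (i₀.succAbove k)) ≫ θ' ≫ eA.r := by
        simp only [Preadditive.comp_sum, Preadditive.sum_comp, Category.assoc]
    _ = eA.i ≫ (θ ≫ θ') ≫ eA.r - (eA.i ≫ θ ≫ p i₀) ≫ ι i₀ ≫ θ' ≫ eA.r := by
        simp only [hrest, Preadditive.sub_comp, Preadditive.comp_sub, Category.id_comp,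
          Category.assoc]
    _ = 𝟙 A := by rw [hAθ, hθ, Limits.zero_comp, sub_zero, Category.id_comp, eA.retract]

end IsSumOfLocals

lemma exists_retract_complement {B M : C} (e : Retract B M) :
    ∃ (Q : C) (e' : Retract Q M), e'.i ≫ e.r = 0 ∧ e.r ≫ e.i + e'.r ≫ e'.i = 𝟙 M := by
  obtain ⟨Q, q, δ, hT⟩ := distinguished_cocone_triangle e.i
  have hδ : δ = 0 := by
    have h : δ ≫ e.i⟦(1 : ℤ)⟧' = 0 := comp_distTriang_mor_zero₃₁ _ hT
    calc δ = δ ≫ (e.i ≫ e.r)⟦(1 : ℤ)⟧' := by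
          rw [e.retract, CategoryTheory.Functor.map_id, Category.comp_id]
      _ = 0 := by rw [Functor.map_comp, ← Category.assoc, h, Limits.zero_comp]
  obtain ⟨v, hv⟩ : ∃ v : Q ⟶ M, 𝟙 Q = v ≫ q :=
    Triangle.coyoneda_exact₃ _ hT (𝟙 Q) ((Category.id_comp δ).trans hδ)
  have he : e.i ≫ (𝟙 M - e.r ≫ e.i) = 0 := by
    rw [Preadditive.comp_sub, Category.comp_id, e.retract_assoc, sub_self]
  obtain ⟨t, ht⟩ : ∃ t : Q ⟶ M, 𝟙 M - e.r ≫ e.i = q ≫ t := Triangle.yoneda_exact₂ _ hT _ he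
  have hq : e.i ≫ q = 0 := comp_distTriang_mor_zero₁₂ _ hT
  refine ⟨Q, ⟨v ≫ (𝟙 M - e.r ≫ e.i), q, ?_⟩, ?_, ?_⟩
  · simp [hq, ← hv]
  · simp [Preadditive.sub_comp]
  · dsimp
    rw [ht, reassoc_of% hv.symm, ← ht]
    abel

lemma exists_leftMinimal_retract_of_isSumOfLocals {L : C} (n : ℕ) {M : C} (f : L ⟶ M)
    (hM : IsSumOfLocals M n) :
    ∃ (M₂ : C) (e : Retract M₂ M), f ≫ e.r ≫ e.i = f ∧ LeftMinimal (f ≫ e.r) := by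
  induction n generalizing M with
  | zero =>
    obtain ⟨N, p, ι, hsum, -⟩ := hM
    have hM₀ : IsZero M := (IsZero.iff_id_eq_zero M).2 (by simp [← hsum])
    exact ⟨M, Retract.refl M, by simp, fun u _ =>
      ⟨⟨u, hM₀.eq_of_src _ _, hM₀.eq_of_src _ _⟩⟩⟩
  | succ n ih =>
    by_cases hf : LeftMinimal f
    · exact ⟨M, Retract.refl M, by simp, by simpa using hf⟩
    obtain ⟨B, e, hB, hB₀, hfe⟩ := hM.exists_local_retract hf
    obtain ⟨Q, e', he'e, hsplit⟩ := exists_retract_complement e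
    obtain ⟨M₂, e₂, hf₂, hmin⟩ := ih (f ≫ e'.r) (hM.of_complement e' e he'e hB hB₀)
    have hfQ : f ≫ e'.r ≫ e'.i = f := by
      simpa [Preadditive.comp_add, reassoc_of% hfe] using f ≫= hsplit
    refine ⟨M₂, e₂.trans e', ?_, by simpa using hmin⟩
    simp only [Retract.trans_r, Retract.trans_i, Category.assoc]
    rw [reassoc_of% hf₂, hfQ]

lemma exists_leftMinimal_retract (hKS : KrullSchmidtCat C) {L M : C} (f : L ⟶ M) :
    ∃ (M₂ : C) (e : Retract M₂ M), f ≫ e.r ≫ e.i = f ∧ LeftMinimal (f ≫ e.r) := by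
  obtain ⟨n, N, p, ι, -, hsum, hloc⟩ := hKS M
  exact exists_leftMinimal_retract_of_isSumOfLocals n f ⟨N, p, ι, hsum, hloc⟩

lemma exists_cone_retract {L M M₂ K K₂ : C} {f : L ⟶ M} (e : Retract M₂ M)
    (hf : f ≫ e.r ≫ e.i = f) {g : M ⟶ K} {h : K ⟶ L⟦(1 : ℤ)⟧}
    (hT : Triangle.mk f g h ∈ distTriang C) {g₂ : M₂ ⟶ K₂} {h₂ : K₂ ⟶ L⟦(1 : ℤ)⟧}
    (hT₂ : Triangle.mk (f ≫ e.r) g₂ h₂ ∈ distTriang C) :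
    ∃ c : Retract K₂ K, h₂ = c.i ≫ h := by
  have hφ₁ : (f ≫ e.r) ≫ e.i = 𝟙 L ≫ f := by rw [Category.id_comp, Category.assoc, hf]
  have hψ₁ : f ≫ e.r = 𝟙 L ≫ f ≫ e.r := (Category.id_comp _).symm
  obtain ⟨c, hc₂, hc₃⟩ : ∃ c : K₂ ⟶ K, g₂ ≫ c = e.i ≫ g ∧ h₂ ≫ (𝟙 L)⟦(1 : ℤ)⟧' = c ≫ h :=
    complete_distinguished_triangle_morphism _ _ hT₂ hT (𝟙 L) e.i hφ₁
  obtain ⟨c', hc₂', hc₃'⟩ : ∃ c' : K ⟶ K₂, g ≫ c' = e.r ≫ g₂ ∧ h ≫ (𝟙 L)⟦(1 : ℤ)⟧' = c' ≫ h₂ :=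
    complete_distinguished_triangle_morphism _ _ hT hT₂ (𝟙 L) e.r hψ₁
  let φ := Triangle.homMk (Triangle.mk (f ≫ e.r) g₂ h₂) (Triangle.mk f g h) (𝟙 L) e.i c hφ₁
    hc₂ hc₃ ≫ Triangle.homMk (Triangle.mk f g h) (Triangle.mk (f ≫ e.r) g₂ h₂) (𝟙 L) e.r c'
    hψ₁ hc₂' hc₃'
  have : IsIso (c ≫ c') := isIso₃_of_isIso₁₂ φ hT₂ hT₂
    (by change IsIso (𝟙 L ≫ 𝟙 L); infer_instance)
    (by change IsIso (e.i ≫ e.r); rw [e.retract]; infer_instance)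
  rw [CategoryTheory.Functor.map_id, Category.comp_id] at hc₃
  exact ⟨⟨c, c' ≫ inv (c ≫ c'), by rw [← Category.assoc, IsIso.hom_inv_id]⟩, hc₃⟩

lemma IsLeftApprox.of_comp_eq {D : Set C} {A M M' : C} {f : A ⟶ M} (hf : IsLeftApprox D f)
    {f' : A ⟶ M'} (hM' : M' ∈ D) {σ : M' ⟶ M} (h : f' ≫ σ = f) : IsLeftApprox D f' :=
  ⟨hM', fun _ hX' g => let ⟨k, hk⟩ := hf.2 hX' g; ⟨σ ≫ k, by rw [← hk, ← h, Category.assoc]⟩⟩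

lemma AddClosed.mem_of_retract_s6 {D : Set C} (hD : AddClosed D) {A M : C} (hM : M ∈ D)
    (e : Retract A M) : A ∈ D :=
  hD A (addClosure.smd (addClosure.of hM) ⟨e.i, e.r, e.retract⟩)

lemma isLeftApprox_of_distTriang {R X : Set C} (hXrig : RelRigid R X X) {L X₁ X₀ : C}
    (hX₁ : X₁ ∈ X) (hX₀ : X₀ ∈ X) {x₁ : L ⟶ X₁} {g : X₁ ⟶ X₀} {x₀ : X₀ ⟶ L⟦(1 : ℤ)⟧}
    (hT : Triangle.mk x₁ g x₀ ∈ distTriang C) (hfac : Factors (shiftSet R 1) x₀) :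
    IsLeftApprox X x₁ := by
  refine ⟨hX₁, fun X' hX' y => ?_⟩
  obtain ⟨Z, a, b, hZ, rfl⟩ := hfac
  have hy : (a ≫ b) ≫ y⟦(1 : ℤ)⟧' = 0 :=
    hXrig hX₀ hX' _ ⟨Z, a, b ≫ y⟦(1 : ℤ)⟧', hZ, Category.assoc _ _ _⟩
  obtain ⟨k, hk⟩ : ∃ k : X₁⟦(1 : ℤ)⟧ ⟶ X'⟦(1 : ℤ)⟧, y⟦(1 : ℤ)⟧' = (-x₁⟦(1 : ℤ)⟧') ≫ k :=
    Triangle.yoneda_exact₂ _ (rot_of_distTriang _ (rot_of_distTriang _ hT)) _ hy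
  obtain ⟨k₀, rfl⟩ := (shiftFunctor C (1 : ℤ)).map_surjective k
  refine ⟨-k₀, (shiftFunctor C (1 : ℤ)).map_injective ?_⟩
  simp [hk]

theorem statement_6_general (hKS : KrullSchmidtCat C) (R X : Set C)
    (haddX : AddClosed X) (hXrig : RelRigid R X X)
    {L X₁ X₀ : C} (hX₁ : X₁ ∈ X) (hX₀ : X₀ ∈ X)
    (x₁ : L ⟶ X₁) (g : X₁ ⟶ X₀) (x₀ : X₀ ⟶ L⟦(1:ℤ)⟧)
    (hT : Triangle.mk x₁ g x₀ ∈ distTriang C)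
    (hfac : Factors (shiftSet R 1) x₀) :
    IsLeftApprox X x₁ ∧
      ∃ (X₂ X₄ : C) (x₂ : L ⟶ X₂) (g' : X₂ ⟶ X₄) (x₄ : X₄ ⟶ L⟦(1:ℤ)⟧),
        X₂ ∈ X ∧ X₄ ∈ X ∧ (Triangle.mk x₂ g' x₄ ∈ distTriang C) ∧
        IsLeftApprox X x₂ ∧ LeftMinimal x₂ ∧ Factors (shiftSet R 1) x₄ := by
  have hx₁ : IsLeftApprox X x₁ := isLeftApprox_of_distTriang hXrig hX₁ hX₀ hT hfac
  obtain ⟨X₂, e, hx₁e, hmin⟩ := exists_leftMinimal_retract hKS x₁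
  have hX₂ : X₂ ∈ X := haddX.mem_of_retract_s6 hX₁ e
  obtain ⟨X₄, g', x₄, hT'⟩ := distinguished_cocone_triangle (x₁ ≫ e.r)
  obtain ⟨c, rfl⟩ := exists_cone_retract e hx₁e hT hT'
  obtain ⟨Z, a, b, hZ, rfl⟩ := hfac
  refine ⟨hx₁, X₂, X₄, x₁ ≫ e.r, g', c.i ≫ a ≫ b, hX₂, haddX.mem_of_retract_s6 hX₀ c, hT',
    hx₁.of_comp_eq hX₂ (by simpa using hx₁e), hmin, Z, c.i ≫ a, b, hZ, (Category.assoc _ _ _).symm⟩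

theorem statement_6 (hKS : KrullSchmidtCat C) (R X : Set C)
    (hrig : Rigid R) (haddX : AddClosed X) (hXrig : RelRigid R X X)
    {L X₁ X₀ : C} (hX₁ : X₁ ∈ X) (hX₀ : X₀ ∈ X)
    (x₁ : L ⟶ X₁) (g : X₁ ⟶ X₀) (x₀ : X₀ ⟶ L⟦(1:ℤ)⟧)
    (hT : Triangle.mk x₁ g x₀ ∈ distTriang C)
    (hfac : Factors (shiftSet R 1) x₀) :
    IsLeftApprox X x₁ ∧
      ∃ (X₂ X₄ : C) (x₂ : L ⟶ X₂) (g' : X₂ ⟶ X₄) (x₄ : X₄ ⟶ L⟦(1:ℤ)⟧),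
        X₂ ∈ X ∧ X₄ ∈ X ∧ (Triangle.mk x₂ g' x₄ ∈ distTriang C) ∧
        IsLeftApprox X x₂ ∧ LeftMinimal x₂ ∧ Factors (shiftSet R 1) x₄ :=
  statement_6_general hKS R X haddX hXrig hX₁ hX₀ x₁ g x₀ hT hfac

end RelCT
end

section
/- Let X be an R[1]-rigid subcategory and L an R[1]-rigid object. Given a triangle L --x--> X1 --y--> X0 --z--> L[1] with X0, X1 ∈ X, where x is left minimal and z factors through R[1], the objects X0 and X1 have no common indecomposable direct summand. -/
/-!
Let `W` be a common summand, split off by `s₀, r₀` in `X₀` and by `s₁, r₁` in `X₁`. The two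
rigidity hypotheses let one rewrite `r₁ s₀ z` as `y m z` with `m ∈ End X₀`, so `s₀ - s₁ y m` kills
`z` and lifts along `y` to some `t`. Then `1_W = t y r₀ + s₁ y m r₀`, and since `End W` is local one
of the two summands is invertible. Either way `W` is a retract of `X₁` through a retraction that
factors through `y`, hence vanishes on `x`; left minimality of `x` then forces `W = 0`.
-/

open CategoryTheory CategoryTheory.Limits CategoryTheory.Pretriangulated

universe v u w

namespace RelCT

variable {C : Type u} [Category.{v} C] [Preadditive C] [HasZeroObject C]
  [HasShift C ℤ] [∀ n : ℤ, (CategoryTheory.shiftFunctor C n).Additive] [Pretriangulated C]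

section Preadditive

variable {D : Type*} [Category D] [Preadditive D]

lemma KrullSchmidtCat.exists_iso_local_of_indec (hKS : KrullSchmidtCat D) {W : D}
    (hW : Indec W) : ∃ (A : D) (_ : W ≅ A), ∀ φ : A ⟶ A, IsIso φ ∨ IsIso (𝟙 A - φ) := by
  obtain ⟨n, f, p, ι, hιp, hsum, hlocal⟩ := hKS W
  have hidem : ∀ i, p i ≫ ι i = 0 ∨ p i ≫ ι i = 𝟙 W := fun i =>
    hW.2 _ (by rw [Category.assoc, ← Category.assoc (ι i), hιp, Category.id_comp])
  obtain ⟨j, hj⟩ : ∃ j, p j ≫ ι j = 𝟙 W := by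
    by_contra! hne
    refine hW.1 ((IsZero.iff_id_eq_zero W).2 ?_)
    rw [← hsum]
    exact Finset.sum_eq_zero fun i _ => (hidem i).resolve_right (hne i)
  exact ⟨f j, ⟨p j, ι j, hj, hιp j⟩, hlocal j⟩

lemma KrullSchmidtCat.isIso_or_isIso_of_add_eq_id (hKS : KrullSchmidtCat D) {W : D}
    (hW : Indec W) {φ ψ : W ⟶ W} (h : φ + ψ = 𝟙 W) : IsIso φ ∨ IsIso ψ := by
  obtain ⟨A, e, hlocal⟩ := hKS.exists_iso_local_of_indec hW
  have hconj : ∀ θ : W ⟶ W, IsIso (e.inv ≫ θ ≫ e.hom) → IsIso θ := fun θ _ => by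
    simpa using (inferInstance : IsIso (e.hom ≫ (e.inv ≫ θ ≫ e.hom) ≫ e.inv))
  obtain rfl : ψ = 𝟙 W - φ := eq_sub_of_add_eq' h
  refine (hlocal (e.inv ≫ φ ≫ e.hom)).imp (hconj φ) fun h' => hconj _ ?_
  simpa [Preadditive.comp_sub, Preadditive.sub_comp] using h'

lemma LeftMinimal.isZero_of_retract {L B W : D} {x : L ⟶ B} (hmin : LeftMinimal x)
    {a : W ⟶ B} {b : B ⟶ W} (hab : a ≫ b = 𝟙 W) (hxb : x ≫ b = 0) : IsZero W := by
  have : IsIso (𝟙 B - b ≫ a) := hmin _ (by simp [Preadditive.comp_sub, reassoc_of% hxb])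
  have ha : a = 0 := (cancel_mono (𝟙 B - b ≫ a)).1 <| by
    simp [Preadditive.comp_sub, reassoc_of% hab]
  rw [IsZero.iff_id_eq_zero, ← hab, ha, zero_comp]

lemma LeftMinimal.isZero_of_isIso_comp {L X₁ X₀ W : D} {x : L ⟶ X₁} {y : X₁ ⟶ X₀}
    (hmin : LeftMinimal x) (hxy : x ≫ y = 0) {a : W ⟶ X₁} {b : X₀ ⟶ W}
    (h : IsIso (a ≫ y ≫ b)) : IsZero W :=
  hmin.isZero_of_retract (b := y ≫ b ≫ inv (a ≫ y ≫ b))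
    (by rw [← Category.assoc, ← Category.assoc, Category.assoc a, IsIso.hom_inv_id])
    (by rw [reassoc_of% hxy, zero_comp])

end Preadditive

lemma exists_comp_eq_comp_comp_of_relRigid {R X : Set C} (hXrig : RelRigid R X X)
    {L X₁ X₀ : C} (hL : RelRigid R {L} {L}) (hX₁ : X₁ ∈ X) (hX₀ : X₀ ∈ X)
    {x : L ⟶ X₁} {y : X₁ ⟶ X₀} {z : X₀ ⟶ L⟦(1:ℤ)⟧} (hT : Triangle.mk x y z ∈ distTriang C)
    (hfac : Factors (shiftSet R 1) z) (g : X₁ ⟶ X₀) : ∃ m : X₀ ⟶ X₀, g ≫ z = y ≫ m ≫ z := by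
  obtain ⟨Z, z₁, z₂, hZ, hz⟩ := hfac
  have hxgz : x ≫ g ≫ z = 0 := hL rfl rfl _ ⟨Z, x ≫ g ≫ z₁, z₂, hZ, by simp [hz]⟩
  obtain ⟨k, hk⟩ : ∃ k : X₀ ⟶ L⟦(1:ℤ)⟧, g ≫ z = y ≫ k := Triangle.yoneda_exact₂ _ hT _ hxgz
  have hzx : z ≫ x⟦(1:ℤ)⟧' = 0 := comp_distTriang_mor_zero₃₁ _ hT
  have hykx : y ≫ k ≫ x⟦(1:ℤ)⟧' = 0 := by
    rw [← Category.assoc, ← hk, Category.assoc, hzx, comp_zero]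
  have hkx : k ≫ x⟦(1:ℤ)⟧' = 0 := by
    obtain ⟨h, hh⟩ : ∃ h : L⟦(1:ℤ)⟧ ⟶ X₁⟦(1:ℤ)⟧, k ≫ x⟦(1:ℤ)⟧' = z ≫ h :=
      Triangle.yoneda_exact₃ _ hT _ hykx
    exact hXrig hX₀ hX₁ _ ⟨Z, z₁, z₂ ≫ h, hZ, by simp [hh, hz]⟩
  obtain ⟨m, hm⟩ : ∃ m : X₀ ⟶ X₀, k = m ≫ z := Triangle.coyoneda_exact₁ _ hT k hkx
  exact ⟨m, hm ▸ hk⟩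

theorem statement_7_general (hKS : KrullSchmidtCat C) (R X : Set C)
    (hXrig : RelRigid R X X)
    {L X₁ X₀ : C} (hL : RelRigid R {L} {L}) (hX₁ : X₁ ∈ X) (hX₀ : X₀ ∈ X)
    (x : L ⟶ X₁) (y : X₁ ⟶ X₀) (z : X₀ ⟶ L⟦(1:ℤ)⟧)
    (hT : Triangle.mk x y z ∈ distTriang C)
    (hmin : LeftMinimal x) (hfac : Factors (shiftSet R 1) z) :
    ¬ ∃ W : C, Indec W ∧ (∃ (s : W ⟶ X₀) (r : X₀ ⟶ W), s ≫ r = 𝟙 W) ∧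
      (∃ (s : W ⟶ X₁) (r : X₁ ⟶ W), s ≫ r = 𝟙 W) := by
  rintro ⟨W, hW, ⟨s₀, r₀, hsr₀⟩, ⟨s₁, r₁, hsr₁⟩⟩
  obtain ⟨m, hm⟩ :=
    exists_comp_eq_comp_comp_of_relRigid hXrig hL hX₁ hX₀ hT hfac (r₁ ≫ s₀)
  have hsz : (s₀ - s₁ ≫ y ≫ m) ≫ z = 0 := by
    rw [Preadditive.sub_comp, Category.assoc, Category.assoc, ← hm, Category.assoc,
      reassoc_of% hsr₁, sub_self]
  obtain ⟨t, ht⟩ : ∃ t : W ⟶ X₁, s₀ - s₁ ≫ y ≫ m = t ≫ y := Triangle.coyoneda_exact₃ _ hT _ hsz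
  have hsum : t ≫ y ≫ r₀ + s₁ ≫ y ≫ m ≫ r₀ = 𝟙 W := by
    rw [← hsr₀, ← Category.assoc, ← ht]
    simp
  have hxy : x ≫ y = 0 := comp_distTriang_mor_zero₁₂ _ hT
  refine hW.1 ?_
  rcases hKS.isIso_or_isIso_of_add_eq_id hW hsum with h | h
  · exact hmin.isZero_of_isIso_comp hxy h
  · exact hmin.isZero_of_isIso_comp (b := m ≫ r₀) hxy h

theorem statement_7 (hKS : KrullSchmidtCat C) (R X : Set C)
    (hrig : Rigid R) (hXrig : RelRigid R X X)
    {L X₁ X₀ : C} (hL : RelRigid R {L} {L}) (hX₁ : X₁ ∈ X) (hX₀ : X₀ ∈ X)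
    (x : L ⟶ X₁) (y : X₁ ⟶ X₀) (z : X₀ ⟶ L⟦(1:ℤ)⟧)
    (hT : Triangle.mk x y z ∈ distTriang C)
    (hmin : LeftMinimal x) (hfac : Factors (shiftSet R 1) z) :
    ¬ ∃ W : C, Indec W ∧ (∃ (s : W ⟶ X₀) (r : X₀ ⟶ W), s ≫ r = 𝟙 W) ∧
      (∃ (s : W ⟶ X₁) (r : X₁ ⟶ W), s ≫ r = 𝟙 W) :=
  statement_7_general hKS R X hXrig hL hX₁ hX₀ x y z hT hmin hfac

end RelCT
end
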